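/- Renaming transforms the metric along the image of the index set: for a renaming relation R on Σ, d_{R(U)}(P[R], Q[R]) ≤ d_U(P, Q), where R(U) = {y | ∃x ∈ U, x R y}. -/

import Mathlib

open scoped Classical

namespace CSPLL

variable {E : Type*}

/-- Events: `none` is the termination signal ✓, `some a` is a visible event. -/
abbrev Ev (E : Type*) := Option E

/-- A member of `Σ^{*✓}`: the termination event ✓ may occur only as the last element. -/
def ValidTrace (s : List (Ev E)) : Prop := (none : Ev E) ∉ s.dropLast

/-- The semantic domain `T↓`: pairs `(T, D)` of (behavioural) traces and divergences
satisfying the axioms of the divergence-strict traces model. -/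
structure TD (E : Type*) where
  T : Set (List (Ev E))
  D : Set (List (Ev E))
  valid : ∀ s ∈ T, ValidTrace s
  d_sub : D ⊆ T
  nonempty : [] ∈ T
  prefix_closed : ∀ s t : List (Ev E), s ++ t ∈ T → s ∈ T
  tick_div : ∀ s : List (Ev E), s ++ [none] ∈ D → s ∈ D
  div_ext : ∀ s t : List (Ev E), s ∈ D → (none : Ev E) ∉ s → ValidTrace t → s ++ t ∈ D

/-- Raw trace/divergence pairs. -/
abbrev Pair (E : Type*) := Set (List (Ev E)) × Set (List (Ev E))

def TD.pair (P : TD E) : Pair E := (P.T, P.D)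

/-- `lengthU U s` counts the occurrences of events from `U` in the trace `s`. -/
noncomputable def lengthU (U : Set E) (s : List (Ev E)) : ℕ :=
  (s.filter fun x => decide (∃ a ∈ U, x = some a)).length

/-- Restriction `(T,D) ↾_U n` of a trace/divergence pair to `U`-length `n`. -/
noncomputable def restrict (U : Set E) (n : ℕ) (P : Pair E) : Pair E :=
  let D' := P.2 ∪ {u | ∃ s t, s ∈ P.1 ∧ (none : Ev E) ∉ s ∧ lengthU U s = n ∧
                       ValidTrace t ∧ u = s ++ t}
  (D' ∪ {s ∈ P.1 | lengthU U s ≤ n}, D')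

/-- The metric `d_U(P,Q) = inf {2^{-n} | P ↾_U n = Q ↾_U n}` (taken in `[0,1]`). -/
noncomputable def dU (U : Set E) (P Q : Pair E) : ℝ :=
  sInf {x : ℝ | ∃ n : ℕ, restrict U n P = restrict U n Q ∧ x = (1 / 2 : ℝ) ^ n}

noncomputable def dTD (U : Set E) (P Q : TD E) : ℝ := dU U P.pair Q.pair

/-- Lifting of a renaming relation on `Σ` to `Σ^✓` (relating ✓ to itself). -/
def RE (R : E → E → Prop) (x y : Ev E) : Prop :=
  match x, y with
  | none, none => True
  | some a, some b => R a b
  | _, _ => False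

/-- Renaming `P[R]` on trace/divergence pairs. -/
def renP (R : E → E → Prop) (P : TD E) : Pair E :=
  let D' := {x | ∃ s ∈ P.D, (none : Ev E) ∉ s ∧ ∃ t r, List.Forall₂ (RE R) s t ∧
      ValidTrace r ∧ x = t ++ r}
  (D' ∪ {t | ∃ s ∈ P.T, List.Forall₂ (RE R) s t}, D')

/-! The restriction `P[R] ↾_{R(U)} n` depends only on `P ↾_U n`: it equals
`(P ↾_U n)[R] ↾_{R(U)} n` (`restrict_renP`). So every level at which `P` and `Q` agree for
`d_U` is a level at which `P[R]` and `Q[R]` agree for `d_{R(U)}`, and the infimum defining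
`d_{R(U)}` runs over a larger set. The only quantitative input is that renaming cannot lower the
count of indexed events (`s R t` and `s(i) ∈ U` give `t(i) ∈ R(U)`): a renamed trace whose
`R(U)`-length is at most `n` comes from a trace of `U`-length at most `n`, and the renaming of
a trace of `U`-length `n` has a prefix of `R(U)`-length exactly `n`, itself the renaming of a
prefix. -/

variable {R : E → E → Prop} {U : Set E} {n : ℕ} {X Y : Set (List (Ev E))}

lemma RE.eq_none_iff {x y : Ev E} (h : RE R x y) : x = none ↔ y = none := by
  cases x <;> cases y <;> simp_all [RE]

lemma none_mem_iff_of_forall₂ {s t : List (Ev E)} (h : List.Forall₂ (RE R) s t) :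
    none ∈ s ↔ none ∈ t := by
  induction h with
  | nil => simp
  | cons hab _ ih => simp only [List.mem_cons, ih, @eq_comm _ none, hab.eq_none_iff]

lemma exists_append_of_forall₂_append {α β : Type*} {r : α → β → Prop} {s₁ s₂ : List α}
    {t : List β} (h : List.Forall₂ r (s₁ ++ s₂) t) :
    ∃ t₁ t₂, t = t₁ ++ t₂ ∧ List.Forall₂ r s₁ t₁ ∧ List.Forall₂ r s₂ t₂ :=
  ⟨t.take s₁.length, t.drop s₁.length, (List.take_append_drop _ _).symm,
    by simpa using List.forall₂_take s₁.length h, by simpa using List.forall₂_drop s₁.length h⟩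

lemma ValidTrace.of_forall₂ {s t : List (Ev E)} (h : List.Forall₂ (RE R) s t)
    (hs : ValidTrace s) : ValidTrace t := by
  have hd : List.Forall₂ (RE R) s.dropLast t.dropLast := by
    simpa only [List.dropLast_eq_take, h.length_eq] using List.forall₂_take (t.length - 1) h
  exact fun ht => hs ((none_mem_iff_of_forall₂ hd).2 ht)

lemma ValidTrace.append {s t : List (Ev E)} (hs : none ∉ s) (ht : ValidTrace t) :
    ValidTrace (s ++ t) := by
  rcases eq_or_ne t [] with rfl | hne
  · rw [List.append_nil]
    exact fun h => hs (List.dropLast_subset s h)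
  · simpa [ValidTrace, List.dropLast_append_of_ne_nil hne, hs] using ht

lemma ValidTrace.eq_dropLast_append {s : List (Ev E)} (hs : ValidTrace s) (h : none ∈ s) :
    s = s.dropLast ++ [none] := by
  have hne : s ≠ [] := List.ne_nil_of_mem h
  have hlast : s.getLast hne = none := by
    rw [← List.dropLast_append_getLast hne, List.mem_append] at h
    simpa [eq_comm] using h.resolve_left hs
  rw [← hlast, List.dropLast_append_getLast]

lemma lengthU_append (s t : List (Ev E)) :
    lengthU U (s ++ t) = lengthU U s + lengthU U t := by
  simp [lengthU, List.filter_append]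

lemma lengthU_cons (a : Ev E) (t : List (Ev E)) :
    lengthU U (a :: t) = lengthU U [a] + lengthU U t :=
  lengthU_append [a] t

lemma lengthU_le_of_forall₂ {s t : List (Ev E)} (h : List.Forall₂ (RE R) s t) :
    lengthU U s ≤ lengthU {y | ∃ x ∈ U, R x y} t := by
  induction h with
  | nil => rfl
  | @cons a b s t hab _ ih =>
    rw [lengthU_cons a s, lengthU_cons b t]
    refine Nat.add_le_add ?_ ih
    cases a <;> cases b <;> simp_all [lengthU, RE, List.filter_cons]
    split_ifs <;> simp_all

lemma exists_lengthU_take_eq {t : List (Ev E)} (h : n ≤ lengthU U t) :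
    ∃ i, lengthU U (t.take i) = n := by
  induction t generalizing n with
  | nil => exact ⟨0, by simp_all [lengthU]⟩
  | cons a t ih =>
    rcases n with _ | n
    · exact ⟨0, rfl⟩
    have ha : lengthU U [a] ≤ 1 := List.length_filter_le _ _
    rw [lengthU_cons] at h
    obtain ⟨i, hi⟩ := ih (n := n + 1 - lengthU U [a]) (by omega)
    exact ⟨i + 1, by rw [List.take_succ_cons, lengthU_cons, hi]; omega⟩

def extendAt (U : Set E) (n : ℕ) (X : Set (List (Ev E))) : Set (List (Ev E)) :=
  {u | ∃ s t, s ∈ X ∧ (none : Ev E) ∉ s ∧ lengthU U s = n ∧ ValidTrace t ∧ u = s ++ t}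

def renTraces (R : E → E → Prop) (X : Set (List (Ev E))) : Set (List (Ev E)) :=
  {t | ∃ s ∈ X, List.Forall₂ (RE R) s t}

def renDivs (R : E → E → Prop) (X : Set (List (Ev E))) : Set (List (Ev E)) :=
  {x | ∃ s ∈ X, (none : Ev E) ∉ s ∧ ∃ t r, List.Forall₂ (RE R) s t ∧ ValidTrace r ∧ x = t ++ r}

def renPair (R : E → E → Prop) (A : Pair E) : Pair E :=
  (renDivs R A.2 ∪ renTraces R A.1, renDivs R A.2)

lemma restrict_eq (U : Set E) (n : ℕ) (A : Pair E) : restrict U n A =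
    (A.2 ∪ extendAt U n A.1 ∪ {s ∈ A.1 | lengthU U s ≤ n}, A.2 ∪ extendAt U n A.1) :=
  rfl

lemma renP_eq_renPair (R : E → E → Prop) (P : TD E) : renP R P = renPair R P.pair :=
  rfl

lemma extendAt_mono (h : X ⊆ Y) : extendAt U n X ⊆ extendAt U n Y := by
  rintro _ ⟨s, t, hs, hns, hls, ht, rfl⟩
  exact ⟨s, t, h hs, hns, hls, ht, rfl⟩

lemma extendAt_union : extendAt U n (X ∪ Y) = extendAt U n X ∪ extendAt U n Y := by
  ext u
  constructor
  · rintro ⟨s, t, hs | hs, hns, hls, ht, rfl⟩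
    exacts [Or.inl ⟨s, t, hs, hns, hls, ht, rfl⟩, Or.inr ⟨s, t, hs, hns, hls, ht, rfl⟩]
  · rintro (hu | hu)
    exacts [extendAt_mono Set.subset_union_left hu, extendAt_mono Set.subset_union_right hu]

lemma append_mem_extendAt {u r : List (Ev E)} (hu : u ∈ extendAt U n X) (hnu : none ∉ u)
    (hr : ValidTrace r) : u ++ r ∈ extendAt U n X := by
  obtain ⟨s, t, hs, hns, hls, -, rfl⟩ := hu
  exact ⟨s, t ++ r, hs, hns, hls, .append (fun h => hnu (by simp [h])) hr, by simp⟩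

lemma extendAt_extendAt_subset : extendAt U n (extendAt U n X) ⊆ extendAt U n X := by
  rintro _ ⟨u, r, hu, hnu, -, hr, rfl⟩
  exact append_mem_extendAt hu hnu hr

lemma renDivs_mono (h : X ⊆ Y) : renDivs R X ⊆ renDivs R Y := by
  rintro _ ⟨s, hs, hns, t, r, hst, hr, rfl⟩
  exact ⟨s, h hs, hns, t, r, hst, hr, rfl⟩

lemma renTraces_mono (h : X ⊆ Y) : renTraces R X ⊆ renTraces R Y := by
  rintro _ ⟨s, hs, hst⟩
  exact ⟨s, h hs, hst⟩

lemma append_mem_renDivs {u r : List (Ev E)} (hu : u ∈ renDivs R X) (hnu : none ∉ u)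
    (hr : ValidTrace r) : u ++ r ∈ renDivs R X := by
  obtain ⟨s, hs, hns, t, r', hst, -, rfl⟩ := hu
  exact ⟨s, hs, hns, t, r' ++ r, hst, .append (fun h => hnu (by simp [h])) hr, by simp⟩

lemma extendAt_renDivs_subset (W : Set E) : extendAt W n (renDivs R X) ⊆ renDivs R X := by
  rintro _ ⟨u, r, hu, hnu, -, hr, rfl⟩
  exact append_mem_renDivs hu hnu hr

lemma mem_renTraces_sep {u : List (Ev E)} (hu : u ∈ renTraces R X)
    (hlu : lengthU {y | ∃ x ∈ U, R x y} u ≤ n) :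
    u ∈ renTraces R {s ∈ X | lengthU U s ≤ n} := by
  obtain ⟨s, hs, hsu⟩ := hu
  exact ⟨s, ⟨hs, (lengthU_le_of_forall₂ hsu).trans hlu⟩, hsu⟩

lemma extendAt_renTraces_subset_sep :
    extendAt {y | ∃ x ∈ U, R x y} n (renTraces R X) ⊆
      extendAt {y | ∃ x ∈ U, R x y} n (renTraces R {s ∈ X | lengthU U s ≤ n}) := by
  rintro _ ⟨u, r, hu, hnu, hlu, hr, rfl⟩
  exact ⟨u, r, mem_renTraces_sep hu hlu.le, hnu, hlu, hr, rfl⟩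

lemma renTraces_extendAt_subset (hX : ∀ s t, s ++ t ∈ X → s ∈ X) :
    renTraces R (extendAt U n X) ⊆ extendAt {y | ∃ x ∈ U, R x y} n (renTraces R X) := by
  rintro _ ⟨_, ⟨s, t, hs, hns, hls, ht, rfl⟩, hu⟩
  obtain ⟨u₁, u₂, rfl, hsu, htu⟩ := exists_append_of_forall₂_append hu
  have hnu₁ : none ∉ u₁ := (none_mem_iff_of_forall₂ hsu).not.1 hns
  obtain ⟨i, hi⟩ := exists_lengthU_take_eq (hls ▸ lengthU_le_of_forall₂ (U := U) hsu)
  have hsi : s.take i ∈ X := hX _ (s.drop i) (by rwa [List.take_append_drop])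
  refine ⟨u₁.take i, u₁.drop i ++ u₂, ⟨s.take i, hsi, List.forall₂_take i hsu⟩,
    fun h => hnu₁ (List.mem_of_mem_take h), hi,
    .append (fun h => hnu₁ (List.mem_of_mem_drop h)) (ht.of_forall₂ htu), ?_⟩
  rw [← List.append_assoc, List.take_append_drop]

lemma renDivs_extendAt_subset (hX : ∀ s t, s ++ t ∈ X → s ∈ X) :
    renDivs R (extendAt U n X) ⊆ extendAt {y | ∃ x ∈ U, R x y} n (renTraces R X) := by
  rintro _ ⟨s, hs, hns, t, r, hst, hr, rfl⟩
  exact append_mem_extendAt (renTraces_extendAt_subset hX ⟨s, hs, hst⟩)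
    ((none_mem_iff_of_forall₂ hst).not.1 hns) hr

lemma renTraces_subset_renDivs (P : TD E) : renTraces R P.D ⊆ renDivs R P.D := by
  rintro u ⟨s, hs, hsu⟩
  by_cases hns : none ∈ s
  · have hvs : ValidTrace s := P.valid s (P.d_sub hs)
    rw [hvs.eq_dropLast_append hns] at hs hsu
    obtain ⟨t, _, rfl, hst, _ | ⟨-, ⟨⟩⟩⟩ := exists_append_of_forall₂_append hsu
    exact ⟨s.dropLast, P.tick_div _ hs, hvs, t, _, hst, by simp [ValidTrace], rfl⟩
  · exact ⟨s, hs, hns, u, [], hsu, by simp [ValidTrace], by simp⟩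

lemma restrict_fst (U : Set E) (n : ℕ) (A : Pair E) :
    (restrict U n A).1 = (restrict U n A).2 ∪ {s ∈ A.1 | lengthU U s ≤ n} :=
  rfl

lemma restrict_renPair_snd (W : Set E) (A : Pair E) :
    (restrict W n (renPair R A)).2 = renDivs R A.2 ∪ extendAt W n (renTraces R A.1) := by
  rw [restrict_eq, renPair, extendAt_union, ← Set.union_assoc,
    Set.union_eq_left.2 (extendAt_renDivs_subset W)]

lemma renDivs_restrict_snd_subset (P : TD E) :
    renDivs R (restrict U n P.pair).2 ⊆
      renDivs R P.D ∪ extendAt {y | ∃ x ∈ U, R x y} n (renTraces R P.T) := by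
  rintro _ ⟨s, hs | hs, hns, t, r, hst, hr, rfl⟩
  · exact Or.inl ⟨s, hs, hns, t, r, hst, hr, rfl⟩
  · exact Or.inr (renDivs_extendAt_subset P.prefix_closed ⟨s, hs, hns, t, r, hst, hr, rfl⟩)

lemma renTraces_restrict_fst_subset (P : TD E) :
    renTraces R (restrict U n P.pair).1 ⊆
      renDivs R P.D ∪ extendAt {y | ∃ x ∈ U, R x y} n (renTraces R P.T) ∪ renTraces R P.T := by
  rintro u ⟨s, (hs | hs) | hs, hsu⟩
  · exact Or.inl (Or.inl (renTraces_subset_renDivs P ⟨s, hs, hsu⟩))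
  · exact Or.inl (Or.inr (renTraces_extendAt_subset P.prefix_closed ⟨s, hs, hsu⟩))
  · exact Or.inr ⟨s, hs.1, hsu⟩

theorem restrict_renP (P : TD E) :
    restrict {y | ∃ x ∈ U, R x y} n (renP R P) =
      restrict {y | ∃ x ∈ U, R x y} n (renPair R (restrict U n P.pair)) := by
  set W := {y | ∃ x ∈ U, R x y}
  set A := restrict U n P.pair
  have hsub : P.D ⊆ A.2 ∧ {s ∈ P.T | lengthU U s ≤ n} ⊆ A.1 :=
    ⟨fun s hs => Or.inl hs, fun s hs => Or.inr hs⟩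
  set S := renDivs R P.D ∪ extendAt W n (renTraces R P.T)
  have hP : (restrict W n (renP R P)).2 = S := restrict_renPair_snd W P.pair
  have hA : (restrict W n (renPair R A)).2 = S := by
    rw [restrict_renPair_snd]
    refine subset_antisymm (Set.union_subset (renDivs_restrict_snd_subset P) ?_) ?_
    · refine (extendAt_mono (renTraces_restrict_fst_subset P)).trans ?_
      rw [extendAt_union, extendAt_union]
      exact Set.union_subset (Set.union_subset
        ((extendAt_renDivs_subset W).trans Set.subset_union_left)
        (extendAt_extendAt_subset.trans Set.subset_union_right)) Set.subset_union_right
    · exact Set.union_subset_union (renDivs_mono hsub.1)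
        (extendAt_renTraces_subset_sep.trans (extendAt_mono (renTraces_mono hsub.2)))
  refine Prod.ext ?_ (hP.trans hA.symm)
  rw [restrict_fst, restrict_fst, hP, hA]
  ext u
  constructor
  · rintro (hu | ⟨hu | hu, hlu⟩)
    · exact Or.inl hu
    · exact Or.inl (Or.inl hu)
    · exact Or.inr ⟨Or.inr (renTraces_mono hsub.2 (mem_renTraces_sep hu hlu)), hlu⟩
  · rintro (hu | ⟨hu | hu, hlu⟩)
    · exact Or.inl hu
    · exact Or.inl (renDivs_restrict_snd_subset P hu)
    · rcases renTraces_restrict_fst_subset P hu with hu | hu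
      · exact Or.inl hu
      · exact Or.inr ⟨Or.inr hu, hlu⟩

lemma restrict_zero (P : TD E) :
    restrict U 0 P.pair = ({s | ValidTrace s}, {s | ValidTrace s}) := by
  have hsnd : (restrict U 0 P.pair).2 = {s | ValidTrace s} := by
    refine subset_antisymm (Set.union_subset (fun s hs => P.valid s (P.d_sub hs)) ?_) ?_
    · rintro _ ⟨s, t, -, hns, -, ht, rfl⟩
      exact ht.append hns
    · exact fun t ht => Or.inr ⟨[], t, P.nonempty, List.not_mem_nil, rfl, ht, rfl⟩
  refine Prod.ext (subset_antisymm ?_ ?_) hsnd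
  · rw [restrict_fst, hsnd]
    exact Set.union_subset subset_rfl fun s hs => P.valid s hs.1
  · rw [restrict_fst, hsnd]
    exact Set.subset_union_left

lemma dU_le_dU_of_restrict_eq {W : Set E} {A B A' B' : Pair E}
    (h₀ : restrict U 0 A = restrict U 0 B)
    (h : ∀ n, restrict U n A = restrict U n B → restrict W n A' = restrict W n B') :
    dU W A' B' ≤ dU U A B := by
  refine csInf_le_csInf ⟨0, ?_⟩ ⟨1, 0, h₀, by norm_num⟩ ?_
  · rintro _ ⟨n, -, rfl⟩
    positivity
  · rintro _ ⟨n, hn, rfl⟩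
    exact ⟨n, h n hn, rfl⟩

/-- Renaming transforms the metric along the image of the index set:
`d_{R(U)}(P[R], Q[R]) ≤ d_U(P, Q)`. -/
theorem rename_nonexpansive (U : Set E) (R : E → E → Prop) (P Q : TD E) :
    dU {y | ∃ x ∈ U, R x y} (renP R P) (renP R Q) ≤ dU U P.pair Q.pair :=
  dU_le_dU_of_restrict_eq (by rw [restrict_zero, restrict_zero]) fun n h => by
    rw [restrict_renP, restrict_renP, h]

end CSPLL
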